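/- Let E be a real Banach space and A an r_L-dense subset of E × E*. Then A − gra(−J) (Minkowski difference in E × E*) is dense in E × E* for the norm topology. -/

import Mathlib

/-!
Given `(y, y*)`, `r_L`-density yields `(s, s*) ∈ A` with `r_L(x, ψ)` small, where `x = s - y` and
`ψ = s* - y*`. The function `r_L(·, ψ) = ½‖·‖² + ψ + ½‖ψ‖²` is convex, continuous and nonnegative,
so Ekeland's variational principle gives `v` close to `x` minimising `r_L(·, ψ) + δ‖· - v‖`.
Separating the epigraph of `r_L(·, ψ)` from the strict hypograph of the cone
`r_L(v, ψ) - δ‖· - v‖` in `E × ℝ` gives a subgradient `g` of `r_L(·, ψ)` at `v` with `‖g‖ ≤ δ`.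
Then `g - ψ` is a subgradient of `½‖·‖²` at `v`, i.e. lies in `J(v)`, so `(v, ψ - g) ∈ gra(-J)`
is close to `(x, ψ)`: this is the Brøndsted–Rockafellar theorem for `½‖·‖²`.
-/

open Pointwise

/-- `r_L(x, x*) = ½‖x‖² + ½‖x*‖² + ⟨x, x*⟩`. -/
noncomputable def rL {E : Type*} [NormedAddCommGroup E] [NormedSpace ℝ E]
    (x : E) (x' : StrongDual ℝ E) : ℝ :=
  1 / 2 * ‖x‖ ^ 2 + 1 / 2 * ‖x'‖ ^ 2 + x' x

/-- `A ⊆ E × E*` is `r_L`-dense: for every `(y, y*)`,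
`inf_{(s,s*) ∈ A} r_L(s - y, s* - y*) = 0` (since `r_L ≥ 0`, this means for every
`ε > 0` there is `(s, s*) ∈ A` with `r_L(s - y, s* - y*) < ε`). -/
def RLDense {E : Type*} [NormedAddCommGroup E] [NormedSpace ℝ E]
    (A : Set (E × StrongDual ℝ E)) : Prop :=
  ∀ (y : E) (y' : StrongDual ℝ E), ∀ ε > (0 : ℝ),
    ∃ p ∈ A, rL (p.1 - y) (p.2 - y') < ε

/-- The graph of `-J`: pairs `(x, x*)` with `-x* ∈ J(x)`. -/
def graNegJ (E : Type*) [NormedAddCommGroup E] [NormedSpace ℝ E] :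
    Set (E × StrongDual ℝ E) :=
  {p | p.2 p.1 = -‖p.1‖ ^ 2 ∧ ‖p.2‖ = ‖p.1‖}

open Filter Topology Set Metric

section Ekeland

variable {X : Type*} [MetricSpace X]

def ekelandSet (f : X → ℝ) (δ : ℝ) (w : X) : Set X :=
  {u | f u + δ * dist u w ≤ f w}

variable {f : X → ℝ} {δ : ℝ} {u w : X}

lemma self_mem_ekelandSet : w ∈ ekelandSet f δ w := by
  simp [ekelandSet]

lemma ekelandSet_subset (hδ : 0 ≤ δ) (hu : u ∈ ekelandSet f δ w) :
    ekelandSet f δ u ⊆ ekelandSet f δ w := fun z hz => by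
  have := mul_le_mul_of_nonneg_left (dist_triangle z u w) hδ
  simp only [ekelandSet, mem_ofPred_eq] at hu hz ⊢
  linarith

lemma LowerSemicontinuous.isClosed_ekelandSet (hf : LowerSemicontinuous f) :
    IsClosed (ekelandSet f δ w) :=
  (hf.add (continuous_const.mul (continuous_id.dist continuous_const)).lowerSemicontinuous)
    |>.isClosed_preimage (f w)

lemma exists_mem_ekelandSet_subset_closedBall (hbdd : BddBelow (range f)) (hδ : 0 < δ) (w : X)
    {r : ℝ} (hr : 0 < r) : ∃ u ∈ ekelandSet f δ w, ekelandSet f δ u ⊆ closedBall u r := by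
  obtain ⟨_, ⟨u, hu, rfl⟩, hfu⟩ :=
    Real.lt_sInf_add_pos (Set.Nonempty.image f ⟨w, self_mem_ekelandSet⟩) (mul_pos hδ hr)
  -- `u` is almost minimal for `f` on `ekelandSet f δ w`, which contains `ekelandSet f δ u`
  refine ⟨u, hu, fun z hz => ?_⟩
  have hinf : sInf (f '' ekelandSet f δ w) ≤ f z :=
    csInf_le (hbdd.mono (image_subset_range _ _))
      (mem_image_of_mem f (ekelandSet_subset hδ.le hu hz))
  rw [mem_closedBall, ← mul_le_mul_iff_of_pos_left hδ]
  simp only [ekelandSet, mem_ofPred_eq] at hz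
  linarith

-- Ekeland's variational principle
theorem LowerSemicontinuous.exists_forall_le_add_mul_dist [CompleteSpace X]
    (hf : LowerSemicontinuous f) (hbdd : BddBelow (range f)) (hδ : 0 < δ) (x₀ : X) :
    ∃ v, f v + δ * dist v x₀ ≤ f x₀ ∧ ∀ u, f v ≤ f u + δ * dist u v := by
  choose next hnext hsmall using fun (n : ℕ) (w : X) =>
    exists_mem_ekelandSet_subset_closedBall hbdd hδ w (pow_pos (half_pos one_pos) n)
  let x : ℕ → X := fun n => Nat.rec x₀ next n
  let s : ℕ → Set X := fun n => ekelandSet f δ (x (n + 1))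
  have hanti : Antitone fun n => ekelandSet f δ (x n) :=
    antitone_nat_of_succ_le fun n => ekelandSet_subset hδ.le (hnext n (x n))
  have hdiam : ∀ n, diam (s n) ≤ 2 * (1 / 2) ^ n := fun n =>
    diam_le_of_subset_closedBall (by positivity) (hsmall n (x n))
  have hlim : Tendsto (fun n : ℕ => 2 * (1 / 2 : ℝ) ^ n) atTop (𝓝 0) := by
    simpa using (tendsto_pow_atTop_nhds_zero_of_lt_one (by norm_num)
      (by norm_num : (1 / 2 : ℝ) < 1)).const_mul 2
  have hbounded : ∀ n, Bornology.IsBounded (s n) := fun n =>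
    isBounded_closedBall.subset (hsmall n (x n))
  obtain ⟨v, hv⟩ := nonempty_iInter_of_nonempty_biInter (fun n => hf.isClosed_ekelandSet)
    hbounded (fun N => ⟨x (N + 1), mem_iInter₂.2 fun n hn =>
      hanti (Nat.succ_le_succ hn) self_mem_ekelandSet⟩)
    (squeeze_zero (fun n => diam_nonneg) hdiam hlim)
  rw [mem_iInter] at hv
  refine ⟨v, hanti (Nat.zero_le 1) (hv 0), fun u => le_of_not_gt fun hu => ?_⟩
  have hus : ∀ n, u ∈ s n := fun n => ekelandSet_subset hδ.le (hv n) (le_of_lt hu)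
  have huv : dist u v ≤ 0 := ge_of_tendsto' hlim fun n =>
    (dist_le_diam_of_mem (hbounded n) (hus n) (hv n)).trans (hdiam n)
  rw [dist_le_zero.1 huv, dist_self, mul_zero, add_zero] at hu
  exact lt_irrefl _ hu

end Ekeland

section Sandwich

variable {E : Type*} [AddCommGroup E] [Module ℝ E] [TopologicalSpace E] [IsTopologicalAddGroup E]
  [ContinuousSMul ℝ E]

theorem ConvexOn.exists_affine_between {φ κ : E → ℝ} (hφ : ConvexOn ℝ univ φ)
    (hκ : ConcaveOn ℝ univ κ) (hκc : Continuous κ) (hle : κ ≤ φ) :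
    ∃ (L : StrongDual ℝ E) (b : ℝ), ∀ w, κ w ≤ L w + b ∧ L w + b ≤ φ w := by
  have hU : Convex ℝ {p : E × ℝ | p.2 < κ p.1} := by simpa using hκ.convex_strict_hypograph
  have hC : Convex ℝ {p : E × ℝ | φ p.1 ≤ p.2} := by simpa using hφ.convex_epigraph
  have hdisj : Disjoint {p : E × ℝ | p.2 < κ p.1} {p | φ p.1 ≤ p.2} :=
    disjoint_left.2 fun p hpU hpC => (hpU.trans_le (hle p.1)).not_ge hpC
  obtain ⟨F, u, hFU, hFC⟩ := geometric_hahn_banach_open hU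
    (isOpen_lt continuous_snd (hκc.comp continuous_fst)) hC hdisj
  set L := F.comp (ContinuousLinearMap.inl ℝ E ℝ)
  set c := F (0, 1)
  have hF : ∀ w t, F (w, t) = L w + t * c := fun w t => by
    rw [← smul_eq_mul, ← map_smul, ContinuousLinearMap.comp_apply, ← map_add]
    simp
  -- the separating hyperplane is not vertical
  have hc : 0 < c := by
    have hU0 := hFU (0, κ 0 - 1) (by simp)
    have hC0 := hFC (0, φ 0) (by simp)
    rw [hF, map_zero, zero_add] at hU0 hC0
    nlinarith [hle 0]
  have haff : ∀ w, (-(c⁻¹ • L)) w + u / c = (u - L w) / c := fun w => by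
    simp only [neg_apply, smul_apply, smul_eq_mul]
    ring
  refine ⟨-(c⁻¹ • L), u / c, fun w => ⟨le_of_forall_lt fun t ht => ?_, ?_⟩⟩
  · have := hFU (w, t) ht
    rw [hF] at this
    rw [haff, lt_div_iff₀ hc]
    linarith
  · have := hFC (w, φ w) (by simp)
    rw [hF] at this
    rw [haff, div_le_iff₀ hc]
    linarith

end Sandwich

section NormedSpace

variable {E : Type*} [NormedAddCommGroup E] [NormedSpace ℝ E]

theorem ConvexOn.exists_subgradient_norm_le {φ : E → ℝ} {δ : ℝ} {v : E}
    (hφ : ConvexOn ℝ univ φ) (hδ : 0 ≤ δ) (hv : ∀ u, φ v ≤ φ u + δ * dist u v) :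
    ∃ g : StrongDual ℝ E, ‖g‖ ≤ δ ∧ ∀ u, g (u - v) ≤ φ u - φ v := by
  obtain ⟨L, b, hLb⟩ := hφ.exists_affine_between (κ := fun u => φ v - δ * dist u v)
    ((concaveOn_const _ convex_univ).sub ((convexOn_univ_dist v).smul hδ)) (by fun_prop)
    fun u => by linarith [hv u]
  have hb : L v + b = φ v := le_antisymm (hLb v).2 (by simpa using (hLb v).1)
  have hlower : ∀ w, -(δ * ‖w‖) ≤ L w := fun w => by
    have := (hLb (v + w)).1
    rw [dist_self_add_left, map_add] at this
    linarith
  refine ⟨L, L.opNorm_le_bound hδ fun w => abs_le.2 ⟨hlower w, ?_⟩, fun u => ?_⟩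
  · have := hlower (-w)
    rw [map_neg, norm_neg] at this
    linarith
  · have := (hLb u).2
    rw [map_sub]
    linarith

lemma le_of_forall_pos_le_add_mul {a b c : ℝ} (h : ∀ t > 0, a ≤ b + t * c) : a ≤ b := by
  have hlim : Tendsto (fun t => b + t * c) (𝓝[>] 0) (𝓝 b) :=
    ((by fun_prop : Continuous fun t : ℝ => b + t * c).tendsto' 0 b (by simp)).mono_left
      nhdsWithin_le_nhds
  exact ge_of_tendsto hlim (eventually_nhdsWithin_of_forall h)

theorem mem_graNegJ_of_subgradient {W : StrongDual ℝ E} {v : E}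
    (hW : ∀ u, W (u - v) ≤ 1 / 2 * ‖u‖ ^ 2 - 1 / 2 * ‖v‖ ^ 2) : (v, -W) ∈ graNegJ E := by
  have hscaled : ∀ w, ∀ t > 0, t * W w ≤ 1 / 2 * ‖v + t • w‖ ^ 2 - 1 / 2 * ‖v‖ ^ 2 :=
    fun w t _ => by simpa using hW (v + t • w)
  have hbound : ∀ w, W w ≤ ‖v‖ * ‖w‖ := fun w =>
    le_of_forall_pos_le_add_mul (c := ‖w‖ ^ 2 / 2) fun t ht => by
      have h1 := hscaled w t ht
      have h2 : ‖v + t • w‖ ≤ ‖v‖ + t * ‖w‖ :=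
        (norm_add_le _ _).trans_eq (by rw [norm_smul, Real.norm_of_nonneg ht.le])
      have h3 := pow_le_pow_left₀ (norm_nonneg _) h2 2
      refine le_of_mul_le_mul_left ?_ ht
      nlinarith
  have hnorm : ‖W‖ ≤ ‖v‖ := W.opNorm_le_bound (norm_nonneg v) fun w => by
    have := hbound (-w)
    rw [map_neg, norm_neg] at this
    exact abs_le.2 ⟨by linarith, hbound w⟩
  have hWv_ge : ‖v‖ ^ 2 ≤ W v := le_of_forall_pos_le_add_mul (c := ‖v‖ ^ 2 / 2) fun t ht => by
    have h1 := hscaled (-v) t ht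
    have h2 : ‖v + t • -v‖ ^ 2 = (1 - t) ^ 2 * ‖v‖ ^ 2 := by
      rw [show v + t • -v = (1 - t) • v by rw [sub_smul, one_smul, smul_neg, sub_eq_add_neg],
        norm_smul, mul_pow, Real.norm_eq_abs, sq_abs]
    rw [h2, map_neg] at h1
    refine le_of_mul_le_mul_left ?_ ht
    nlinarith
  have hWv_le : W v ≤ ‖W‖ * ‖v‖ := (le_abs_self _).trans (W.le_opNorm v)
  have hWv : W v = ‖v‖ ^ 2 := le_antisymm (by nlinarith [norm_nonneg v]) hWv_ge
  refine ⟨by rw [neg_apply, hWv], ?_⟩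
  rw [norm_neg]
  exact le_antisymm hnorm (by nlinarith [norm_nonneg W])

lemma rL_nonneg (x : E) (x' : StrongDual ℝ E) : 0 ≤ rL x x' := by
  have h := neg_abs_le (x' x)
  have h' : |x' x| ≤ ‖x'‖ * ‖x‖ := x'.le_opNorm x
  unfold rL
  nlinarith [sq_nonneg (‖x‖ - ‖x'‖)]

lemma continuous_rL_left (x' : StrongDual ℝ E) : Continuous fun x => rL x x' := by
  unfold rL
  fun_prop

lemma convexOn_rL_left (x' : StrongDual ℝ E) : ConvexOn ℝ univ fun x => rL x x' := by
  have := (((convexOn_univ_norm.pow (fun _ _ => norm_nonneg _) 2).smul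
    (by norm_num : (0 : ℝ) ≤ 1 / 2)).add_const (1 / 2 * ‖x'‖ ^ 2)).add
    ((x' : E →ₗ[ℝ] ℝ).convexOn convex_univ)
  exact this.congr fun x _ => by simp [rL]

theorem exists_mem_graNegJ_of_forall_rL_le {x' : StrongDual ℝ E} {v : E} {δ : ℝ} (hδ : 0 ≤ δ)
    (hv : ∀ u, rL v x' ≤ rL u x' + δ * dist u v) :
    ∃ g, (v, g) ∈ graNegJ E ∧ ‖x' - g‖ ≤ δ := by
  obtain ⟨g, hgδ, hg⟩ := (convexOn_rL_left x').exists_subgradient_norm_le hδ hv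
  refine ⟨x' - g, ?_, by rwa [sub_sub_cancel]⟩
  simpa using mem_graNegJ_of_subgradient (W := g - x') fun u => by
    have := hg u
    simp only [rL, map_sub] at this
    simp only [sub_apply, map_sub]
    linarith

theorem exists_mem_graNegJ_mul_norm_sub_le_rL [CompleteSpace E] (x : E) (x' : StrongDual ℝ E)
    {δ : ℝ} (hδ : 0 < δ) : ∃ p ∈ graNegJ E, δ * ‖x - p.1‖ ≤ rL x x' ∧ ‖x' - p.2‖ ≤ δ := by
  obtain ⟨v, hvx, hv⟩ :=
    (continuous_rL_left x').lowerSemicontinuous.exists_forall_le_add_mul_dist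
      ⟨0, forall_mem_range.2 fun u => rL_nonneg u x'⟩ hδ x
  obtain ⟨g, hg, hx'g⟩ := exists_mem_graNegJ_of_forall_rL_le hδ.le hv
  refine ⟨(v, g), hg, ?_, hx'g⟩
  rw [← dist_eq_norm, dist_comm]
  linarith [rL_nonneg v x']

end NormedSpace

theorem stmt8 {E : Type*} [NormedAddCommGroup E] [NormedSpace ℝ E] [CompleteSpace E]
    (A : Set (E × StrongDual ℝ E)) (hA : RLDense A) :
    Dense (A - graNegJ E) := by
  rw [Metric.dense_iff]
  rintro ⟨y, y'⟩ r hr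
  obtain ⟨a, haA, ha⟩ := hA y y' (r ^ 2 / 4) (by positivity)
  obtain ⟨b, hb, hab₁, hab₂⟩ :=
    exists_mem_graNegJ_mul_norm_sub_le_rL (a.1 - y) (a.2 - y') (half_pos hr)
  refine ⟨a - b, ?_, sub_mem_sub haA hb⟩
  have hb₁ : ‖a.1 - y - b.1‖ < r / 2 := by nlinarith [norm_nonneg (a.1 - y - b.1)]
  rw [mem_ball, Prod.dist_eq, max_lt_iff, dist_eq_norm, dist_eq_norm, Prod.fst_sub, Prod.snd_sub,
    sub_right_comm, sub_right_comm a.2]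
  constructor <;> linarith
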